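/- arXiv:2110.04401 — 3 statements merged into one kernel-verified Lean document; each statement's English description precedes it below -/
import Mathlib

section
/- For all block indices 1 ≤ i, j ≤ (N+1)/2, the (i,j)-th Nr×Nt block of the virtual channel matrix equals the subcarrier channel matrix of index i+j−2; that is, H_v^{(i,j)} = H^{(i+j−2)}. -/
/- STATEMENT 0: For all block indices 1 ≤ i, j ≤ (N+1)/2, the (i,j)-th Nr×Nt block of the
virtual channel matrix equals the subcarrier channel matrix of index i+j−2;
that is, H_v^{(i,j)} = H^{(i+j−2)}.
We write N = 2*m+1 (N ≥ 3 odd), so (N+1)/2 = m+1, and use 0-based indices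
i, j : Fin (m+1); then the claim reads H_v^{(i,j)} = H^{(i+j)}.  Blocks are encoded
by indexing H_v with the product type Fin (m+1) × Fin Nr (rows) and
Fin (m+1) × Fin Nt (columns). -/

open scoped BigOperators

/-- `ξ(t) ∈ ℂ^{(N+1)/2}`, with `ξ(t)_i = √(2/(N+1)) e^{−j2π(i−1)t/(N Ts)}` (1-based `i`). -/
noncomputable def xiVec (m N : ℕ) (Ts t : ℝ) : Fin (m + 1) → ℂ := fun i =>
  (Real.sqrt (2 / ((N : ℝ) + 1)) : ℂ) *
    Complex.exp (((-(2 * Real.pi * (i : ℝ) * t / ((N : ℝ) * Ts))) : ℝ) * Complex.I)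

/-- The `n`-th subcarrier channel matrix
`H^{(n)} = Σ_{k=0}^K γ_k e^{−j2π n τ_k/(N Ts)} α_k β_k^H ∈ ℂ^{Nr×Nt}`. -/
noncomputable def Hsub (Nr Nt K N : ℕ) (Ts : ℝ) (γ : Fin (K + 1) → ℂ)
    (τ : Fin (K + 1) → ℝ) (α : Fin (K + 1) → Fin Nr → ℂ)
    (β : Fin (K + 1) → Fin Nt → ℂ) (n : ℕ) : Matrix (Fin Nr) (Fin Nt) ℂ :=
  ∑ k, (γ k *
      Complex.exp (((-(2 * Real.pi * (n : ℝ) * τ k / ((N : ℝ) * Ts))) : ℝ) * Complex.I)) •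
    Matrix.vecMulVec (α k) (fun t => (starRingEnd ℂ) (β k t))

/-- The virtual channel matrix
`H_v = Σ_{k=0}^K l_k (ξ(τ_k) ⊗ α_k)(ξ(−τ_k) ⊗ β_k)^H`, with `l_k = (N+1)γ_k/2`,
indexed by `Fin (m+1) × Fin Nr` and `Fin (m+1) × Fin Nt` (Kronecker product indexing). -/
noncomputable def Hvirt (m Nr Nt K N : ℕ) (Ts : ℝ) (γ : Fin (K + 1) → ℂ)
    (τ : Fin (K + 1) → ℝ) (α : Fin (K + 1) → Fin Nr → ℂ)
    (β : Fin (K + 1) → Fin Nt → ℂ) :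
    Matrix (Fin (m + 1) × Fin Nr) (Fin (m + 1) × Fin Nt) ℂ :=
  ∑ k, ((((N : ℂ) + 1) / 2) * γ k) •
    Matrix.vecMulVec (fun p => xiVec m N Ts (τ k) p.1 * α k p.2)
      (fun q => (starRingEnd ℂ) (xiVec m N Ts (-(τ k)) q.1 * β k q.2))

section ChannelModel

open Complex

noncomputable def subcarrierPhase (N : ℕ) (Ts x t : ℝ) : ℂ :=
  exp (((-(2 * Real.pi * x * t / ((N : ℝ) * Ts))) : ℝ) * I)

theorem subcarrierPhase_mul (N : ℕ) (Ts x y t : ℝ) :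
    subcarrierPhase N Ts x t * subcarrierPhase N Ts y t = subcarrierPhase N Ts (x + y) t := by
  rw [subcarrierPhase, subcarrierPhase, subcarrierPhase, ← exp_add]
  congr 1
  push_cast
  ring

theorem conj_subcarrierPhase_neg (N : ℕ) (Ts x t : ℝ) :
    starRingEnd ℂ (subcarrierPhase N Ts x (-t)) = subcarrierPhase N Ts x t := by
  rw [subcarrierPhase, subcarrierPhase, ← exp_conj, map_mul, conj_ofReal, conj_I]
  congr 1
  push_cast
  ring

theorem xiVec_apply (m N : ℕ) (Ts t : ℝ) (i : Fin (m + 1)) :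
    xiVec m N Ts t i = (Real.sqrt (2 / ((N : ℝ) + 1)) : ℂ) * subcarrierPhase N Ts i t :=
  rfl

theorem Hsub_apply (Nr Nt K N : ℕ) (Ts : ℝ) (γ : Fin (K + 1) → ℂ) (τ : Fin (K + 1) → ℝ)
    (α : Fin (K + 1) → Fin Nr → ℂ) (β : Fin (K + 1) → Fin Nt → ℂ) (n : ℕ) (r : Fin Nr)
    (t : Fin Nt) :
    Hsub Nr Nt K N Ts γ τ α β n r t =
      ∑ k, γ k * subcarrierPhase N Ts n (τ k) * (α k r * starRingEnd ℂ (β k t)) := by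
  simp only [Hsub, Matrix.sum_apply, Matrix.smul_apply, Matrix.vecMulVec_apply, smul_eq_mul,
    subcarrierPhase]

theorem Hvirt_apply (m Nr Nt K N : ℕ) (Ts : ℝ) (γ : Fin (K + 1) → ℂ) (τ : Fin (K + 1) → ℝ)
    (α : Fin (K + 1) → Fin Nr → ℂ) (β : Fin (K + 1) → Fin Nt → ℂ) (i j : Fin (m + 1))
    (r : Fin Nr) (t : Fin Nt) :
    Hvirt m Nr Nt K N Ts γ τ α β (i, r) (j, t) =
      ∑ k, γ k * (((N : ℂ) + 1) / 2 *
        (xiVec m N Ts (τ k) i * starRingEnd ℂ (xiVec m N Ts (-τ k) j))) *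
        (α k r * starRingEnd ℂ (β k t)) := by
  simp only [Hvirt, Matrix.sum_apply, Matrix.smul_apply, Matrix.vecMulVec_apply, smul_eq_mul,
    map_mul]
  refine Finset.sum_congr rfl fun k _ => ?_
  ring

/-- The normalisation `√(2/(N+1))` of `ξ` squares to the inverse of the factor `(N+1)/2`
in `l_k`, so only the product of the two phases survives. -/
theorem scale_mul_xiVec_mul_conj_xiVec_neg (m N : ℕ) (Ts t : ℝ) (i j : Fin (m + 1)) :
    ((N : ℂ) + 1) / 2 * (xiVec m N Ts t i * starRingEnd ℂ (xiVec m N Ts (-t) j)) =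
      subcarrierPhase N Ts ((i : ℕ) + (j : ℕ) : ℕ) t := by
  have hsqrt : (Real.sqrt (2 / ((N : ℝ) + 1)) : ℂ) * (Real.sqrt (2 / ((N : ℝ) + 1)) : ℂ) =
      2 / ((N : ℂ) + 1) := by
    rw [← ofReal_mul, Real.mul_self_sqrt (by positivity)]
    push_cast
    rfl
  have hN : (N : ℂ) + 1 ≠ 0 := by exact_mod_cast N.succ_ne_zero
  rw [xiVec_apply, xiVec_apply, map_mul, conj_ofReal, conj_subcarrierPhase_neg, Nat.cast_add,
    ← subcarrierPhase_mul, mul_mul_mul_comm, hsqrt, ← mul_assoc, div_mul_div_comm,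
    mul_comm (2 : ℂ), div_self (mul_ne_zero hN two_ne_zero), one_mul]

end ChannelModel

theorem virtual_block_eq_subcarrier_general (m : ℕ) (N : ℕ)
    (Ts : ℝ) (Nr Nt : ℕ) (K : ℕ)
    (γ : Fin (K + 1) → ℂ) (τ : Fin (K + 1) → ℝ)
    (α : Fin (K + 1) → Fin Nr → ℂ) (β : Fin (K + 1) → Fin Nt → ℂ) :
    ∀ (i j : Fin (m + 1)) (r : Fin Nr) (t : Fin Nt),
      Hvirt m Nr Nt K N Ts γ τ α β (i, r) (j, t) =
        Hsub Nr Nt K N Ts γ τ α β ((i : ℕ) + (j : ℕ)) r t := by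
  intro i j r t
  simp only [Hvirt_apply, Hsub_apply, scale_mul_xiVec_mul_conj_xiVec_neg]

theorem virtual_block_eq_subcarrier (m : ℕ) (hm : 1 ≤ m) (N : ℕ) (hN : N = 2 * m + 1)
    (Ts : ℝ) (hTs : 0 < Ts) (Nr Nt : ℕ) (hNr : 1 ≤ Nr) (hNt : 1 ≤ Nt) (K : ℕ)
    (γ : Fin (K + 1) → ℂ) (τ : Fin (K + 1) → ℝ)
    (α : Fin (K + 1) → Fin Nr → ℂ) (β : Fin (K + 1) → Fin Nt → ℂ) :
    ∀ (i j : Fin (m + 1)) (r : Fin Nr) (t : Fin Nt),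
      Hvirt m Nr Nt K N Ts γ τ α β (i, r) (j, t) =
        Hsub Nr Nt K N Ts γ τ α β ((i : ℕ) + (j : ℕ)) r t :=
  virtual_block_eq_subcarrier_general m N Ts Nr Nt K γ τ α β
end

section
/- Suppose γ_k ≠ 0 for every k = 0,…,K, the vectors α_0,…,α_K ∈ ℂ^{Nr} are linearly independent, and the vectors β_0,…,β_K ∈ ℂ^{Nt} are linearly independent. Then rank(H_v) = K+1 and, for every 0 ≤ n ≤ N−1, rank(H^{(n)}) = K+1; in particular H_v has the same rank as each subcarrier channel matrix H^{(n)}. -/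
open scoped BigOperators

/-!
Both matrices have the form `∑ k, c k • vecMulVec (u k) (star (v k))` with all `c k ≠ 0` and
linearly independent families `u`, `v`. Such a sum equals `Uᵀ * V`, where the rows of `U` are the
`c k • u k` and those of `V` the `star (v k)`; both row families are independent, so `Uᵀ` has
rank `K + 1` and `V` is surjective, and the product has rank `K + 1`. For `H_v`, the family
`ξ(τ_k) ⊗ α_k` is independent because its first block is `ξ(τ_k)_0 • α_k`, where
`ξ(τ_k)_0 = √(2/(N+1)) ≠ 0`; likewise for `ξ(-τ_k) ⊗ β_k`.
-/

namespace Matrix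

theorem rank_mul_eq_left_of_surjective {R m n o : Type*} [CommRing R] [Fintype n] [Fintype o]
    (A : Matrix m n R) (B : Matrix n o R) (hB : Function.Surjective B.mulVecLin) :
    (A * B).rank = A.rank := by
  rw [rank, rank, mulVecLin_mul,
    LinearMap.range_comp_of_range_eq_top _ (LinearMap.range_eq_top.mpr hB)]

theorem sum_vecMulVec_eq_transpose_mul {R ι m n : Type*} [NonUnitalNonAssocSemiring R]
    [Fintype ι] (a : ι → m → R) (b : ι → n → R) :
    ∑ k, vecMulVec (a k) (b k) = (of a)ᵀ * of b := by
  ext i j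
  simp [sum_apply, mul_apply, vecMulVec_apply]

variable {K ι m n : Type*} [Field K] [Fintype ι] [Fintype n]

theorem rank_of_linearIndependent {b : ι → n → K} (hb : LinearIndependent K b) :
    (of b).rank = Fintype.card ι :=
  (rank_eq_finrank_span_row _).trans (finrank_span_eq_card hb)

theorem mulVecLin_surjective_of_linearIndependent {b : ι → n → K}
    (hb : LinearIndependent K b) : Function.Surjective (of b).mulVecLin := by
  rw [← LinearMap.range_eq_top]
  refine Submodule.eq_top_of_finrank_eq ?_
  rw [← rank, rank_of_linearIndependent hb, Module.finrank_fintype_fun_eq_card]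

theorem rank_sum_vecMulVec [Fintype m] {a : ι → m → K} {b : ι → n → K}
    (ha : LinearIndependent K a) (hb : LinearIndependent K b) :
    (∑ k, vecMulVec (a k) (b k)).rank = Fintype.card ι := by
  rw [sum_vecMulVec_eq_transpose_mul, rank_mul_eq_left_of_surjective _ _
    (mulVecLin_surjective_of_linearIndependent hb), rank_transpose, rank_of_linearIndependent ha]

theorem rank_sum_smul_vecMulVec [Fintype m] {a : ι → m → K} {b : ι → n → K} {c : ι → K}
    (hc : ∀ k, c k ≠ 0) (ha : LinearIndependent K a) (hb : LinearIndependent K b) :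
    (∑ k, c k • vecMulVec (a k) (b k)).rank = Fintype.card ι := by
  simp_rw [← smul_vecMulVec]
  refine rank_sum_vecMulVec ?_ hb
  convert ha.units_smul fun k => Units.mk0 (c k) (hc k) using 1
  ext k : 1
  simp [Units.smul_def]

end Matrix

theorem LinearIndependent.star {R M ι : Type*} [CommSemiring R] [StarRing R] [AddCommMonoid M]
    [Module R M] [StarAddMonoid M] [StarModule R M] {v : ι → M} (hv : LinearIndependent R v) :
    LinearIndependent R (fun k => star (v k)) :=
  hv.map_of_injective_injectiveₛ (Star.star : R → R) (starAddEquiv : M ≃+ M).toAddMonoidHom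
    star_injective star_injective fun r x => by simp [star_smul]

theorem LinearIndependent.kronecker_of_apply_ne_zero {K ι m n : Type*} [Field K]
    {x : ι → m → K} {a : ι → n → K} (ha : LinearIndependent K a) (i₀ : m)
    (hx : ∀ k, x k i₀ ≠ 0) : LinearIndependent K (fun k (p : m × n) => x k p.1 * a k p.2) := by
  refine .of_comp (LinearMap.funLeft K K fun j => (i₀, j)) ?_
  convert ha.units_smul fun k => Units.mk0 (x k i₀) (hx k) using 1
  ext k j
  simp [LinearMap.funLeft, Units.smul_def]

theorem xiVec_zero_ne_zero (m N : ℕ) (Ts t : ℝ) : xiVec m N Ts t 0 ≠ 0 := by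
  simp only [xiVec, Fin.coe_ofNat_eq_mod, Nat.zero_mod, CharP.cast_eq_zero, mul_zero, zero_mul,
    neg_zero, zero_div, Complex.ofReal_zero, Complex.exp_zero, mul_one, ne_eq,
    Complex.ofReal_eq_zero]
  exact (Real.sqrt_pos.mpr (by positivity)).ne'

theorem virtual_and_subcarrier_rank_eq_general (m : ℕ) (N : ℕ)
    (Ts : ℝ) (Nr Nt : ℕ) (K : ℕ)
    (γ : Fin (K + 1) → ℂ) (τ : Fin (K + 1) → ℝ)
    (α : Fin (K + 1) → Fin Nr → ℂ) (β : Fin (K + 1) → Fin Nt → ℂ)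
    (hγ : ∀ k, γ k ≠ 0)
    (hα : LinearIndependent ℂ α) (hβ : LinearIndependent ℂ β) :
    (Hvirt m Nr Nt K N Ts γ τ α β).rank = K + 1 ∧
      ∀ n : ℕ, n ≤ N - 1 → (Hsub Nr Nt K N Ts γ τ α β n).rank = K + 1 := by
  have hl : ((N : ℂ) + 1) / 2 ≠ 0 := div_ne_zero (Nat.cast_add_one_ne_zero N) two_ne_zero
  refine ⟨?_, fun n _ => ?_⟩
  · refine (Matrix.rank_sum_smul_vecMulVec (fun k => mul_ne_zero hl (hγ k))
      (hα.kronecker_of_apply_ne_zero 0 fun k => xiVec_zero_ne_zero m N Ts (τ k))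
      (hβ.kronecker_of_apply_ne_zero 0 fun k => xiVec_zero_ne_zero m N Ts (-τ k)).star).trans
      (Fintype.card_fin _)
  · exact (Matrix.rank_sum_smul_vecMulVec
      (fun k => mul_ne_zero (hγ k) (Complex.exp_ne_zero _)) hα hβ.star).trans (Fintype.card_fin _)

theorem virtual_and_subcarrier_rank_eq (m : ℕ) (hm : 1 ≤ m) (N : ℕ) (hN : N = 2 * m + 1)
    (Ts : ℝ) (hTs : 0 < Ts) (Nr Nt : ℕ) (hNr : 1 ≤ Nr) (hNt : 1 ≤ Nt) (K : ℕ)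
    (γ : Fin (K + 1) → ℂ) (τ : Fin (K + 1) → ℝ)
    (α : Fin (K + 1) → Fin Nr → ℂ) (β : Fin (K + 1) → Fin Nt → ℂ)
    (hγ : ∀ k, γ k ≠ 0)
    (hα : LinearIndependent ℂ α) (hβ : LinearIndependent ℂ β) :
    (Hvirt m Nr Nt K N Ts γ τ α β).rank = K + 1 ∧
      ∀ n : ℕ, n ≤ N - 1 → (Hsub Nr Nt K N Ts γ τ α β n).rank = K + 1 :=
  virtual_and_subcarrier_rank_eq_general m N Ts Nr Nt K γ τ α β hγ hα hβ
end

section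
/- For every matrix M ∈ ℂ^{((N+1)/2)Nr × ((N+1)/2)Nt} that admits at least one finite atomic decomposition M = Σ_k l̃_k A(τ_k, f_{r,k}, f_{t,k}), one has SDP(M) ≤ ‖M‖_𝒜, where SDP(M) = inf { (Tr(T_U) + Tr(T_V))/2 : T_U, T_V Hermitian 2-level Toeplitz matrices of respective sizes ((N+1)/2)Nr and ((N+1)/2)Nt such that the block matrix [[T_U, M],[M^H, T_V]] is positive semidefinite }. -/
/- STATEMENT 9: For every matrix M ∈ ℂ^{((N+1)/2)Nr × ((N+1)/2)Nt} that admits at least one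
finite atomic decomposition M = Σ_k l̃_k A(τ_k, f_{r,k}, f_{t,k}), one has SDP(M) ≤ ‖M‖_𝒜,
where SDP(M) = inf { (Tr(T_U) + Tr(T_V))/2 : T_U, T_V Hermitian 2-level Toeplitz matrices
such that [[T_U, M],[M^H, T_V]] ⪰ 0 } and ‖M‖_𝒜 = inf { Σ_k |l̃_k| : M = Σ_k l̃_k A_k }.
We write N = 2*m+1 (N ≥ 3 odd), so (N+1)/2 = m+1; Kronecker products are encoded via
product index types; infima over sets of real values are taken via sInf. -/

open scoped BigOperators ComplexOrder

/-- The normalized steering vector `a(f) ∈ ℂ^M`, `a(f)_i = (1/√M) e^{−j2π(i−1)f}`. -/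
noncomputable def steerVec (M : ℕ) (f : ℝ) : Fin M → ℂ := fun i =>
  (1 / (Real.sqrt M) : ℂ) *
    Complex.exp (((-(2 * Real.pi * (i : ℝ) * f)) : ℝ) * Complex.I)

/-- `χ(τ, f_r) = ξ(τ) ⊗ α(f_r)`. -/
noncomputable def chiVec (m Nr N : ℕ) (Ts τ fr : ℝ) : Fin (m + 1) × Fin Nr → ℂ :=
  fun p => xiVec m N Ts τ p.1 * steerVec Nr fr p.2

/-- `ζ(τ, f_t) = ξ(−τ) ⊗ β(f_t)`. -/
noncomputable def zetaVec (m Nt N : ℕ) (Ts τ ft : ℝ) : Fin (m + 1) × Fin Nt → ℂ :=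
  fun q => xiVec m N Ts (-τ) q.1 * steerVec Nt ft q.2

/-- The atom `A(τ, f_r, f_t) = χ(τ,f_r) ζ(τ,f_t)^H`. -/
noncomputable def atomMat (m Nr Nt N : ℕ) (Ts τ fr ft : ℝ) :
    Matrix (Fin (m + 1) × Fin Nr) (Fin (m + 1) × Fin Nt) ℂ :=
  Matrix.vecMulVec (chiVec m Nr N Ts τ fr)
    (fun q => (starRingEnd ℂ) (zetaVec m Nt N Ts τ ft q))

/-- A square matrix indexed by pairs is 2-level Toeplitz if its entry at ((i1,i2),(j1,j2))
depends only on (i1−j1, i2−j2). -/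
def IsTwoLevelToeplitz {a b : ℕ} (T : Matrix (Fin a × Fin b) (Fin a × Fin b) ℂ) : Prop :=
  ∀ (i1 j1 i1' j1' : Fin a) (i2 j2 i2' j2' : Fin b),
    (i1 : ℤ) - (j1 : ℤ) = (i1' : ℤ) - (j1' : ℤ) →
    (i2 : ℤ) - (j2 : ℤ) = (i2' : ℤ) - (j2' : ℤ) →
    T (i1, i2) (j1, j2) = T (i1', i2') (j1', j2')

/-- The values `Σ_k |l̃_k|` over all finite atomic decompositions of `M` with parameters
`τ_k/(N Ts) ∈ (0,1]`, `f_{r,k}, f_{t,k} ∈ (−1/2,1/2]`; the atomic norm `‖M‖_𝒜` is the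
infimum of this set. -/
def atomicDecompSums (m Nr Nt N : ℕ) (Ts : ℝ)
    (M : Matrix (Fin (m + 1) × Fin Nr) (Fin (m + 1) × Fin Nt) ℂ) : Set ℝ :=
  { s | ∃ (n : ℕ) (l : Fin n → ℂ) (τ fr ft : Fin n → ℝ),
      (∀ k, τ k / ((N : ℝ) * Ts) ∈ Set.Ioc (0 : ℝ) 1) ∧
      (∀ k, fr k ∈ Set.Ioc (-(1 / 2) : ℝ) (1 / 2)) ∧
      (∀ k, ft k ∈ Set.Ioc (-(1 / 2) : ℝ) (1 / 2)) ∧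
      M = ∑ k, l k • atomMat m Nr Nt N Ts (τ k) (fr k) (ft k) ∧
      s = ∑ k, ‖l k‖ }

/-- The feasible values `(Tr(T_U) + Tr(T_V))/2` of the semidefinite program, over Hermitian
2-level Toeplitz `T_U`, `T_V` making the block matrix `[[T_U, M],[M^H, T_V]]` PSD;
`SDP(M)` is the infimum of this set. -/
def sdpVals (m Nr Nt : ℕ)
    (M : Matrix (Fin (m + 1) × Fin Nr) (Fin (m + 1) × Fin Nt) ℂ) : Set ℝ :=
  { s | ∃ (TU : Matrix (Fin (m + 1) × Fin Nr) (Fin (m + 1) × Fin Nr) ℂ)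
          (TV : Matrix (Fin (m + 1) × Fin Nt) (Fin (m + 1) × Fin Nt) ℂ),
      TU.IsHermitian ∧ TV.IsHermitian ∧
      IsTwoLevelToeplitz TU ∧ IsTwoLevelToeplitz TV ∧
      (Matrix.fromBlocks TU M M.conjTranspose TV).PosSemidef ∧
      s = (((TU.trace + TV.trace) / 2).re) }

/-! Given a decomposition `M = Σ l_k χ_k ζ_kᴴ`, take `T_U = Σ |l_k| χ_k χ_kᴴ` and
`T_V = Σ |l_k| ζ_k ζ_kᴴ`. Writing `l_k = |l_k| u_k` with `|u_k| = 1`, the block matrix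
`[[T_U, M], [Mᴴ, T_V]]` equals `Σ |l_k| w_k w_kᴴ` with `w_k = (u_k χ_k, ζ_k)`, so it is PSD.
The entries of `χ χᴴ` for a Kronecker product `χ` of sampled sinusoids depend only on index
differences, so `T_U, T_V` are 2-level Toeplitz, and `‖χ_k‖ = ‖ζ_k‖ = 1` gives
`(Tr T_U + Tr T_V)/2 = Σ |l_k|`. Every atomic sum is thus a feasible SDP value, and SDP values
are nonnegative, so the infimum over them is a genuine lower bound. -/

open Matrix Complex ComplexConjugate

def IsSampledSinusoid {n : ℕ} (v : Fin n → ℂ) : Prop :=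
  ∃ (c : ℂ) (ω : ℝ), ∀ i, v i = c * exp ((ω * i : ℝ) * I)

theorem IsSampledSinusoid.mul_conj_eq_of_sub_eq {n : ℕ} {v : Fin n → ℂ}
    (hv : IsSampledSinusoid v) {i j i' j' : Fin n} (h : (i : ℤ) - j = i' - j') :
    v i * conj (v j) = v i' * conj (v j') := by
  obtain ⟨c, ω, hcω⟩ := hv
  have key : ∀ i j : Fin n,
      v i * conj (v j) = c * conj c * exp ((ω * ((i : ℤ) - j : ℤ) : ℝ) * I) := by
    intro i j
    rw [hcω, hcω, map_mul, ← exp_conj, mul_mul_mul_comm, ← exp_add]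
    congr 2
    simp only [map_mul, conj_ofReal, conj_I]
    push_cast
    ring
  rw [key, key, h]

theorem isSampledSinusoid_xiVec (m N : ℕ) (Ts t : ℝ) : IsSampledSinusoid (xiVec m N Ts t) :=
  ⟨_, -(2 * Real.pi * t / (N * Ts)), fun i => by unfold xiVec; congr 4; ring⟩

theorem isSampledSinusoid_steerVec (K : ℕ) (f : ℝ) : IsSampledSinusoid (steerVec K f) :=
  ⟨_, -(2 * Real.pi * f), fun i => by unfold steerVec; congr 4; ring⟩

theorem IsTwoLevelToeplitz.smul {a b : ℕ} {T : Matrix (Fin a × Fin b) (Fin a × Fin b) ℂ}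
    (hT : IsTwoLevelToeplitz T) (c : ℂ) : IsTwoLevelToeplitz (c • T) :=
  fun _ _ _ _ _ _ _ _ h₁ h₂ => by simp only [Matrix.smul_apply, hT _ _ _ _ _ _ _ _ h₁ h₂]

theorem isTwoLevelToeplitz_sum {ι : Type*} {a b : ℕ} (s : Finset ι)
    {T : ι → Matrix (Fin a × Fin b) (Fin a × Fin b) ℂ} (hT : ∀ k, IsTwoLevelToeplitz (T k)) :
    IsTwoLevelToeplitz (∑ k ∈ s, T k) :=
  fun _ _ _ _ _ _ _ _ h₁ h₂ => by
    simp only [Matrix.sum_apply]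
    exact Finset.sum_congr rfl fun k _ => hT k _ _ _ _ _ _ _ _ h₁ h₂

theorem isTwoLevelToeplitz_vecMulVec_kronecker {a b : ℕ} {u : Fin a → ℂ} {w : Fin b → ℂ}
    (hu : IsSampledSinusoid u) (hw : IsSampledSinusoid w) :
    IsTwoLevelToeplitz (vecMulVec (fun p => u p.1 * w p.2) (star fun p => u p.1 * w p.2)) :=
  fun _ _ _ _ _ _ _ _ h₁ h₂ => by
    simp only [vecMulVec_apply, Pi.star_apply, star_def, map_mul]
    rw [mul_mul_mul_comm, hu.mul_conj_eq_of_sub_eq h₁, hw.mul_conj_eq_of_sub_eq h₂,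
      mul_mul_mul_comm]

theorem dotProduct_star_self_of_norm_eq {ι : Type*} [Fintype ι] {v : ι → ℂ} {r : ℝ}
    (h : ∀ i, ‖v i‖ = r) : v ⬝ᵥ star v = Fintype.card ι * (r ^ 2 : ℝ) := by
  simp [dotProduct, mul_conj, normSq_eq_norm_sq, h]

theorem dotProduct_star_kronecker {α β : Type*} [Fintype α] [Fintype β] (u : α → ℂ)
    (w : β → ℂ) :
    (fun p : α × β => u p.1 * w p.2) ⬝ᵥ star (fun p : α × β => u p.1 * w p.2) =
      (u ⬝ᵥ star u) * (w ⬝ᵥ star w) := by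
  simp only [dotProduct, Pi.star_apply, star_mul', Fintype.sum_prod_type, Finset.sum_mul_sum]
  exact Finset.sum_congr rfl fun _ _ => Finset.sum_congr rfl fun _ _ => by ring

theorem dotProduct_star_xiVec {m N : ℕ} (hN : N = 2 * m + 1) (Ts t : ℝ) :
    xiVec m N Ts t ⬝ᵥ star (xiVec m N Ts t) = 1 := by
  have hnorm : ∀ i, ‖xiVec m N Ts t i‖ = √(2 / (N + 1)) := fun i => by
    rw [xiVec, norm_mul, norm_exp_ofReal_mul_I, mul_one, norm_real,
      Real.norm_of_nonneg (Real.sqrt_nonneg _)]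
  rw [dotProduct_star_self_of_norm_eq hnorm, Real.sq_sqrt (by positivity), Fintype.card_fin, hN]
  push_cast
  field_simp
  ring

theorem dotProduct_star_steerVec {K : ℕ} (hK : K ≠ 0) (f : ℝ) :
    steerVec K f ⬝ᵥ star (steerVec K f) = 1 := by
  have hnorm : ∀ i, ‖steerVec K f i‖ = 1 / √K := fun i => by
    rw [steerVec, norm_mul, norm_exp_ofReal_mul_I, mul_one, ← ofReal_one, ← ofReal_div, norm_real,
      Real.norm_of_nonneg (by positivity)]
  rw [dotProduct_star_self_of_norm_eq hnorm, Fintype.card_fin, div_pow,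
    Real.sq_sqrt (by positivity)]
  push_cast
  field_simp

theorem dotProduct_star_xiVec_kronecker_steerVec {m N : ℕ} (hN : N = 2 * m + 1) {K : ℕ}
    (hK : K ≠ 0) (Ts t f : ℝ) :
    (fun p : Fin (m + 1) × Fin K => xiVec m N Ts t p.1 * steerVec K f p.2) ⬝ᵥ
      star (fun p : Fin (m + 1) × Fin K => xiVec m N Ts t p.1 * steerVec K f p.2) = 1 := by
  rw [dotProduct_star_kronecker, dotProduct_star_xiVec hN, dotProduct_star_steerVec hK, mul_one]

theorem Matrix.fromBlocks_sum {ι l m n o α : Type*} [AddCommMonoid α] (s : Finset ι)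
    (A : ι → Matrix n l α) (B : ι → Matrix n m α) (C : ι → Matrix o l α) (D : ι → Matrix o m α) :
    fromBlocks (∑ k ∈ s, A k) (∑ k ∈ s, B k) (∑ k ∈ s, C k) (∑ k ∈ s, D k) =
      ∑ k ∈ s, fromBlocks (A k) (B k) (C k) (D k) := by
  ext (i | i) (j | j) <;> simp [Matrix.sum_apply]

theorem posSemidef_fromBlocks_norm_smul_vecMulVec {P Q : Type*} [Fintype P] [Fintype Q]
    (l : ℂ) (x : P → ℂ) (y : Q → ℂ) :
    (fromBlocks ((‖l‖ : ℂ) • vecMulVec x (star x)) (l • vecMulVec x (star y))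
      (l • vecMulVec x (star y))ᴴ ((‖l‖ : ℂ) • vecMulVec y (star y))).PosSemidef := by
  set u := exp (arg l * I)
  have hu : u * conj u = 1 := by
    rw [mul_conj, normSq_eq_norm_sq, norm_exp_ofReal_mul_I, one_pow, ofReal_one]
  have hl : (‖l‖ : ℂ) * u = l := norm_mul_exp_arg_mul_I l
  have hl' : (‖l‖ : ℂ) * conj u = conj l := by
    rw [← conj_ofReal ‖l‖, ← map_mul, hl]
  convert (posSemidef_vecMulVec_self_star (Sum.elim (u • x) y)).smul
    (by positivity : (0 : ℂ) ≤ ‖l‖) using 1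
  ext (i | i) (j | j) <;>
    simp only [fromBlocks_apply₁₁, fromBlocks_apply₁₂, fromBlocks_apply₂₁, fromBlocks_apply₂₂,
      conjTranspose_apply, Matrix.smul_apply, vecMulVec_apply, Pi.star_apply, Pi.smul_apply,
      Sum.elim_inl, Sum.elim_inr, smul_eq_mul, star_def, map_mul, conj_conj]
  · linear_combination (-(‖l‖ * x i * conj (x j))) * hu
  · linear_combination (-(x i * conj (y j))) * hl
  · linear_combination (-(y i * conj (x j))) * hl'

theorem posSemidef_fromBlocks_sum_atoms {ι P Q : Type*} [Fintype ι] [Fintype P] [Fintype Q]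
    (l : ι → ℂ) (x : ι → P → ℂ) (y : ι → Q → ℂ) :
    (fromBlocks (∑ k, (‖l k‖ : ℂ) • vecMulVec (x k) (star (x k)))
      (∑ k, l k • vecMulVec (x k) (star (y k)))
      (∑ k, l k • vecMulVec (x k) (star (y k)))ᴴ
      (∑ k, (‖l k‖ : ℂ) • vecMulVec (y k) (star (y k)))).PosSemidef := by
  rw [conjTranspose_sum, fromBlocks_sum]
  exact posSemidef_sum _ fun k _ => posSemidef_fromBlocks_norm_smul_vecMulVec (l k) (x k) (y k)

theorem trace_sum_smul_vecMulVec_star {ι P : Type*} [Fintype ι] [Fintype P] (c : ι → ℂ)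
    {v : ι → P → ℂ} (hv : ∀ k, v k ⬝ᵥ star (v k) = 1) :
    (∑ k, c k • vecMulVec (v k) (star (v k))).trace = ∑ k, c k := by
  simp [trace_sum, trace_smul, trace_vecMulVec, hv]

theorem nonneg_of_mem_sdpVals {m Nr Nt : ℕ}
    {M : Matrix (Fin (m + 1) × Fin Nr) (Fin (m + 1) × Fin Nt) ℂ} {s : ℝ}
    (hs : s ∈ sdpVals m Nr Nt M) : 0 ≤ s := by
  obtain ⟨TU, TV, -, -, -, -, hPSD, rfl⟩ := hs
  have hTU : TU.PosSemidef := hPSD.submatrix Sum.inl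
  have hTV : TV.PosSemidef := hPSD.submatrix Sum.inr
  have h : (0 : ℂ) ≤ (TU.trace + TV.trace) / 2 :=
    div_nonneg (add_nonneg hTU.trace_nonneg hTV.trace_nonneg) zero_le_two
  exact (nonneg_iff.mp h).1

theorem sum_norm_mem_sdpVals {m N : ℕ} (hN : N = 2 * m + 1) (Ts : ℝ) {Nr Nt : ℕ}
    (hNr : Nr ≠ 0) (hNt : Nt ≠ 0) {ι : Type*} [Fintype ι] (l : ι → ℂ) (τ fr ft : ι → ℝ) :
    ∑ k, ‖l k‖ ∈ sdpVals m Nr Nt (∑ k, l k • atomMat m Nr Nt N Ts (τ k) (fr k) (ft k)) := by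
  set χ := fun k => chiVec m Nr N Ts (τ k) (fr k)
  set ζ := fun k => zetaVec m Nt N Ts (τ k) (ft k)
  have hTU := posSemidef_sum (x := fun k => (‖l k‖ : ℂ) • vecMulVec (χ k) (star (χ k)))
    Finset.univ fun k _ => (posSemidef_vecMulVec_self_star _).smul (by positivity)
  have hTV := posSemidef_sum (x := fun k => (‖l k‖ : ℂ) • vecMulVec (ζ k) (star (ζ k)))
    Finset.univ fun k _ => (posSemidef_vecMulVec_self_star _).smul (by positivity)
  refine ⟨_, _, hTU.isHermitian, hTV.isHermitian,
    isTwoLevelToeplitz_sum _ fun _ => .smul (isTwoLevelToeplitz_vecMulVec_kronecker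
      (isSampledSinusoid_xiVec _ _ _ _) (isSampledSinusoid_steerVec _ _)) _,
    isTwoLevelToeplitz_sum _ fun _ => .smul (isTwoLevelToeplitz_vecMulVec_kronecker
      (isSampledSinusoid_xiVec _ _ _ _) (isSampledSinusoid_steerVec _ _)) _,
    posSemidef_fromBlocks_sum_atoms l χ ζ, ?_⟩
  rw [trace_sum_smul_vecMulVec_star (v := χ) _ fun k =>
      dotProduct_star_xiVec_kronecker_steerVec hN hNr Ts (τ k) (fr k),
    trace_sum_smul_vecMulVec_star (v := ζ) _ fun k =>
      dotProduct_star_xiVec_kronecker_steerVec hN hNt Ts (-τ k) (ft k),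
    ← ofReal_sum, add_self_div_two, ofReal_re]

theorem sdp_le_atomicNorm_general (m : ℕ) (N : ℕ) (hN : N = 2 * m + 1)
    (Ts : ℝ) (Nr Nt : ℕ) (hNr : 1 ≤ Nr) (hNt : 1 ≤ Nt)
    (M : Matrix (Fin (m + 1) × Fin Nr) (Fin (m + 1) × Fin Nt) ℂ)
    (hM : (atomicDecompSums m Nr Nt N Ts M).Nonempty) :
    sInf (sdpVals m Nr Nt M) ≤ sInf (atomicDecompSums m Nr Nt N Ts M) := by
  refine le_csInf hM ?_
  rintro _ ⟨n, l, τ, fr, ft, -, -, -, rfl, rfl⟩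
  exact csInf_le ⟨0, fun _ => nonneg_of_mem_sdpVals⟩
    (sum_norm_mem_sdpVals hN Ts (by omega) (by omega) l τ fr ft)

theorem sdp_le_atomicNorm (m : ℕ) (hm : 1 ≤ m) (N : ℕ) (hN : N = 2 * m + 1)
    (Ts : ℝ) (hTs : 0 < Ts) (Nr Nt : ℕ) (hNr : 1 ≤ Nr) (hNt : 1 ≤ Nt)
    (M : Matrix (Fin (m + 1) × Fin Nr) (Fin (m + 1) × Fin Nt) ℂ)
    (hM : (atomicDecompSums m Nr Nt N Ts M).Nonempty) :
    sInf (sdpVals m Nr Nt M) ≤ sInf (atomicDecompSums m Nr Nt N Ts M) :=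
  sdp_le_atomicNorm_general m N hN Ts Nr Nt hNr hNt M hM
end
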